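/- Let G be a group and let S be a G-graded ring. Then S is nearly epsilon-strongly G-graded if and only if S is symmetrically G-graded and for each g ∈ G the ring S_g S_{g⁻¹} is s-unital. -/

import Mathlib

/-- The product `AB` of two additive subgroups of a (possibly non-unital) ring:
the additive subgroup generated by all products `ab` with `a ∈ A`, `b ∈ B`. -/
def sgMul {S : Type*} [NonUnitalRing S] (A B : AddSubgroup S) : AddSubgroup S :=
  AddSubgroup.closure {x | ∃ a ∈ A, ∃ b ∈ B, x = a * b}

section
variable {G : Type*} [Group G] {S : Type*} [NonUnitalRing S]

/-- A `G`-graded ring `S = ⊕_{g ∈ G} S_g` is *epsilon-strongly `G`-graded* if for every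
`g ∈ G` there are `ε ∈ S_g S_{g⁻¹}` and `ε' ∈ S_{g⁻¹} S_g` with `ε s = s` and `s ε' = s`
for all `s ∈ S_g`. -/
def IsEpsilonStronglyGraded (𝒜 : G → AddSubgroup S) : Prop :=
  ∀ g : G, ∃ ε ∈ sgMul (𝒜 g) (𝒜 g⁻¹), ∃ ε' ∈ sgMul (𝒜 g⁻¹) (𝒜 g),
    ∀ s ∈ 𝒜 g, ε * s = s ∧ s * ε' = s

/-- `S` is *symmetrically `G`-graded* if `S_g S_{g⁻¹} S_g = S_g` for all `g ∈ G`. -/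
def IsSymmetricallyGraded (𝒜 : G → AddSubgroup S) : Prop :=
  ∀ g : G, sgMul (sgMul (𝒜 g) (𝒜 g⁻¹)) (𝒜 g) = 𝒜 g

/-- `S` is *nearly epsilon-strongly `G`-graded* if for every `g ∈ G` and `s ∈ S_g` one has
`s ∈ (S_g S_{g⁻¹}) s` and `s ∈ s (S_{g⁻¹} S_g)`. -/
def IsNearlyEpsilonStronglyGraded (𝒜 : G → AddSubgroup S) : Prop :=
  ∀ g : G, ∀ s ∈ 𝒜 g,
    (∃ t ∈ sgMul (𝒜 g) (𝒜 g⁻¹), t * s = s) ∧ (∃ t ∈ sgMul (𝒜 g⁻¹) (𝒜 g), s * t = s)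

/-- An additive subgroup of a ring is a *unital* ring if it contains a two-sided
multiplicative identity for itself. -/
def IsUnitalSubgroup (A : AddSubgroup S) : Prop :=
  ∃ u ∈ A, ∀ a ∈ A, u * a = a ∧ a * u = a

/-- An additive subgroup of a ring is an *s-unital* ring if `t ∈ At` and `t ∈ tA`
for every `t ∈ A`. -/
def IsSUnitalSubgroup (A : AddSubgroup S) : Prop :=
  ∀ t ∈ A, (∃ a ∈ A, a * t = t) ∧ (∃ b ∈ A, t * b = t)

end

/-! Write `T_g = S_g S_{g⁻¹} ⊆ S_e`: a subring acting on `S_g` from the left and on `S_{g⁻¹}`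
from the right. Local units in `T_g` become common units of finite families (Tominaga's trick:
if `e` fixes a finite family and `f` fixes `m - e m`, then `e + f - f e` fixes the family and
`m`), so an element of a product `M N`, being a finite sum of products `m n`, has a left unit
as soon as every element of `M` has one. Near epsilon-strongness thus makes `T_g` s-unital
(take `M = S_g`, and `M = S_{g⁻¹}` on the right); conversely, s-unitality of `T_g` and
`T_{g⁻¹}` together with `S_g = T_g S_g = S_g T_{g⁻¹}` gives near epsilon-strongness. -/

section sgMul

variable {S : Type*} [NonUnitalRing S] {A B C T M N : AddSubgroup S}

lemma mul_mem_sgMul {a b : S} (ha : a ∈ A) (hb : b ∈ B) : a * b ∈ sgMul A B :=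
  AddSubgroup.subset_closure ⟨a, ha, b, hb, rfl⟩

lemma sgMul_le : sgMul A B ≤ C ↔ ∀ a ∈ A, ∀ b ∈ B, a * b ∈ C := by
  refine ⟨fun h a ha b hb => h (mul_mem_sgMul ha hb), fun h => ?_⟩
  refine (AddSubgroup.closure_le _).2 ?_
  rintro x ⟨a, ha, b, hb, rfl⟩
  exact h a ha b hb

lemma sgMul_mono {A' B' : AddSubgroup S} (hA : A ≤ A') (hB : B ≤ B') :
    sgMul A B ≤ sgMul A' B' :=
  sgMul_le.2 fun _ ha _ hb => mul_mem_sgMul (hA ha) (hB hb)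

lemma sgMul_assoc : sgMul (sgMul A B) C = sgMul A (sgMul B C) := by
  apply le_antisymm
  · refine sgMul_le.2 fun x hx c hc => ?_
    have : sgMul A B ≤ (sgMul A (sgMul B C)).comap (AddMonoidHom.mulRight c) :=
      sgMul_le.2 fun a ha b hb => by
        simpa [mul_assoc] using mul_mem_sgMul ha (mul_mem_sgMul hb hc)
    exact this hx
  · refine sgMul_le.2 fun a ha x hx => ?_
    have : sgMul B C ≤ (sgMul (sgMul A B) C).comap (AddMonoidHom.mulLeft a) :=
      sgMul_le.2 fun b hb c hc => by
        simpa [mul_assoc] using mul_mem_sgMul (mul_mem_sgMul ha hb) hc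
    exact this hx

lemma exists_common_left_unit (hTT : sgMul T T ≤ T) (hTM : sgMul T M ≤ M)
    (hM : ∀ m ∈ M, ∃ e ∈ T, e * m = m) {F : Set S} (hF : F.Finite) (hFM : F ⊆ M) :
    ∃ e ∈ T, ∀ m ∈ F, e * m = m := by
  induction F, hF using Set.Finite.induction_on with
  | empty => exact ⟨0, T.zero_mem, by simp⟩
  | @insert m F _ _ ih =>
    obtain ⟨e, heT, he⟩ := ih ((Set.subset_insert m F).trans hFM)
    have hmM : m ∈ M := hFM (Set.mem_insert m F)
    obtain ⟨f, hfT, hf⟩ := hM (m - e * m) (M.sub_mem hmM (hTM (mul_mem_sgMul heT hmM)))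
    refine ⟨e + f - f * e, T.sub_mem (T.add_mem heT hfT) (hTT (mul_mem_sgMul hfT heT)), ?_⟩
    rintro x (rfl | hx)
    · calc (e + f - f * e) * x = e * x + f * (x - e * x) := by noncomm_ring
        _ = x := by rw [hf]; abel
    · rw [sub_mul, add_mul, mul_assoc, he x hx, add_sub_cancel_right]

lemma exists_left_unit_of_mem_sgMul (hTT : sgMul T T ≤ T) (hTM : sgMul T M ≤ M)
    (hM : ∀ m ∈ M, ∃ e ∈ T, e * m = m) {t : S} (ht : t ∈ sgMul M N) :
    ∃ e ∈ T, e * t = t := by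
  suffices ∃ F : Set S, F.Finite ∧ F ⊆ M ∧ ∀ e : S, (∀ m ∈ F, e * m = m) → e * t = t by
    obtain ⟨F, hF, hFM, hfix⟩ := this
    obtain ⟨e, heT, he⟩ := exists_common_left_unit hTT hTM hM hF hFM
    exact ⟨e, heT, hfix e he⟩
  induction ht using AddSubgroup.closure_induction with
  | mem x hx =>
    obtain ⟨a, ha, b, -, rfl⟩ := hx
    exact ⟨{a}, Set.finite_singleton a, Set.singleton_subset_iff.2 ha,
      fun e he => by rw [← mul_assoc, he a rfl]⟩
  | zero => exact ⟨∅, Set.finite_empty, Set.empty_subset _, fun e _ => mul_zero e⟩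
  | add x y _ _ hx hy =>
    obtain ⟨F, hF, hFM, hxF⟩ := hx
    obtain ⟨F', hF', hF'M, hyF'⟩ := hy
    refine ⟨F ∪ F', hF.union hF', Set.union_subset hFM hF'M, fun e he => ?_⟩
    rw [mul_add, hxF e fun m hm => he m (Or.inl hm), hyF' e fun m hm => he m (Or.inr hm)]
  | neg x _ hx =>
    obtain ⟨F, hF, hFM, hxF⟩ := hx
    exact ⟨F, hF, hFM, fun e he => by rw [mul_neg, hxF e he]⟩

lemma exists_common_right_unit (hTT : sgMul T T ≤ T) (hMT : sgMul M T ≤ M)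
    (hM : ∀ m ∈ M, ∃ e ∈ T, m * e = m) {F : Set S} (hF : F.Finite) (hFM : F ⊆ M) :
    ∃ e ∈ T, ∀ m ∈ F, m * e = m := by
  induction F, hF using Set.Finite.induction_on with
  | empty => exact ⟨0, T.zero_mem, by simp⟩
  | @insert m F _ _ ih =>
    obtain ⟨e, heT, he⟩ := ih ((Set.subset_insert m F).trans hFM)
    have hmM : m ∈ M := hFM (Set.mem_insert m F)
    obtain ⟨f, hfT, hf⟩ := hM (m - m * e) (M.sub_mem hmM (hMT (mul_mem_sgMul hmM heT)))
    refine ⟨e + f - e * f, T.sub_mem (T.add_mem heT hfT) (hTT (mul_mem_sgMul heT hfT)), ?_⟩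
    rintro x (rfl | hx)
    · calc x * (e + f - e * f) = x * e + (x - x * e) * f := by noncomm_ring
        _ = x := by rw [hf]; abel
    · rw [mul_sub, mul_add, ← mul_assoc, he x hx, add_sub_cancel_right]

lemma exists_right_unit_of_mem_sgMul (hTT : sgMul T T ≤ T) (hMT : sgMul M T ≤ M)
    (hM : ∀ m ∈ M, ∃ e ∈ T, m * e = m) {t : S} (ht : t ∈ sgMul N M) :
    ∃ e ∈ T, t * e = t := by
  suffices ∃ F : Set S, F.Finite ∧ F ⊆ M ∧ ∀ e : S, (∀ m ∈ F, m * e = m) → t * e = t by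
    obtain ⟨F, hF, hFM, hfix⟩ := this
    obtain ⟨e, heT, he⟩ := exists_common_right_unit hTT hMT hM hF hFM
    exact ⟨e, heT, hfix e he⟩
  induction ht using AddSubgroup.closure_induction with
  | mem x hx =>
    obtain ⟨a, -, b, hb, rfl⟩ := hx
    exact ⟨{b}, Set.finite_singleton b, Set.singleton_subset_iff.2 hb,
      fun e he => by rw [mul_assoc, he b rfl]⟩
  | zero => exact ⟨∅, Set.finite_empty, Set.empty_subset _, fun e _ => zero_mul e⟩
  | add x y _ _ hx hy =>
    obtain ⟨F, hF, hFM, hxF⟩ := hx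
    obtain ⟨F', hF', hF'M, hyF'⟩ := hy
    refine ⟨F ∪ F', hF.union hF', Set.union_subset hFM hF'M, fun e he => ?_⟩
    rw [add_mul, hxF e fun m hm => he m (Or.inl hm), hyF' e fun m hm => he m (Or.inr hm)]
  | neg x _ hx =>
    obtain ⟨F, hF, hFM, hxF⟩ := hx
    exact ⟨F, hF, hFM, fun e he => by rw [neg_mul, hxF e he]⟩

end sgMul

section Graded

variable {G : Type*} [Group G] {S : Type*} [NonUnitalRing S] {𝒜 : G → AddSubgroup S}

lemma sgMul_inv_le_one (hmul : ∀ g h : G, sgMul (𝒜 g) (𝒜 h) ≤ 𝒜 (g * h)) (g : G) :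
    sgMul (𝒜 g) (𝒜 g⁻¹) ≤ 𝒜 1 :=
  mul_inv_cancel g ▸ hmul g g⁻¹

lemma sgMul_sgMul_inv_left_le (hmul : ∀ g h : G, sgMul (𝒜 g) (𝒜 h) ≤ 𝒜 (g * h)) (g : G) :
    sgMul (sgMul (𝒜 g) (𝒜 g⁻¹)) (𝒜 g) ≤ 𝒜 g :=
  (sgMul_mono (sgMul_inv_le_one hmul g) le_rfl).trans (by simpa only [one_mul] using hmul 1 g)

lemma sgMul_sgMul_inv_right_le (hmul : ∀ g h : G, sgMul (𝒜 g) (𝒜 h) ≤ 𝒜 (g * h)) (g : G) :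
    sgMul (𝒜 g⁻¹) (sgMul (𝒜 g) (𝒜 g⁻¹)) ≤ 𝒜 g⁻¹ :=
  (sgMul_mono le_rfl (sgMul_inv_le_one hmul g)).trans (by simpa only [mul_one] using hmul g⁻¹ 1)

lemma sgMul_sgMul_inv_self_le (hmul : ∀ g h : G, sgMul (𝒜 g) (𝒜 h) ≤ 𝒜 (g * h)) (g : G) :
    sgMul (sgMul (𝒜 g) (𝒜 g⁻¹)) (sgMul (𝒜 g) (𝒜 g⁻¹)) ≤ sgMul (𝒜 g) (𝒜 g⁻¹) := by
  rw [sgMul_assoc]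
  exact sgMul_mono le_rfl (sgMul_sgMul_inv_right_le hmul g)

lemma IsNearlyEpsilonStronglyGraded.isSymmetricallyGraded
    (hmul : ∀ g h : G, sgMul (𝒜 g) (𝒜 h) ≤ 𝒜 (g * h)) (hne : IsNearlyEpsilonStronglyGraded 𝒜) :
    IsSymmetricallyGraded 𝒜 := fun g =>
  le_antisymm (sgMul_sgMul_inv_left_le hmul g) fun s hs => by
    obtain ⟨⟨t, ht, hts⟩, -⟩ := hne g s hs
    exact hts ▸ mul_mem_sgMul ht hs

lemma IsNearlyEpsilonStronglyGraded.isSUnitalSubgroup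
    (hmul : ∀ g h : G, sgMul (𝒜 g) (𝒜 h) ≤ 𝒜 (g * h)) (hne : IsNearlyEpsilonStronglyGraded 𝒜)
    (g : G) : IsSUnitalSubgroup (sgMul (𝒜 g) (𝒜 g⁻¹)) := fun _ ht =>
  ⟨exists_left_unit_of_mem_sgMul (sgMul_sgMul_inv_self_le hmul g) (sgMul_sgMul_inv_left_le hmul g)
      (fun m hm => (hne g m hm).1) ht,
    exists_right_unit_of_mem_sgMul (sgMul_sgMul_inv_self_le hmul g)
      (sgMul_sgMul_inv_right_le hmul g)
      (fun m hm => by simpa only [inv_inv] using (hne g⁻¹ m hm).2) ht⟩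

lemma IsSymmetricallyGraded.isNearlyEpsilonStronglyGraded
    (hmul : ∀ g h : G, sgMul (𝒜 g) (𝒜 h) ≤ 𝒜 (g * h)) (hsym : IsSymmetricallyGraded 𝒜)
    (hsu : ∀ g : G, IsSUnitalSubgroup (sgMul (𝒜 g) (𝒜 g⁻¹))) :
    IsNearlyEpsilonStronglyGraded 𝒜 := by
  intro g s hs
  have hT' : sgMul (sgMul (𝒜 g⁻¹) (𝒜 g)) (sgMul (𝒜 g⁻¹) (𝒜 g)) ≤ sgMul (𝒜 g⁻¹) (𝒜 g) := by
    simpa only [inv_inv] using sgMul_sgMul_inv_self_le hmul g⁻¹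
  have hsu' : IsSUnitalSubgroup (sgMul (𝒜 g⁻¹) (𝒜 g)) := by
    simpa only [inv_inv] using hsu g⁻¹
  have hs' : s ∈ sgMul (𝒜 g) (sgMul (𝒜 g⁻¹) (𝒜 g)) := by
    rwa [← sgMul_assoc, hsym g]
  exact ⟨exists_left_unit_of_mem_sgMul (sgMul_sgMul_inv_self_le hmul g)
      (sgMul_sgMul_inv_self_le hmul g) (fun m hm => (hsu g m hm).1) ((hsym g).ge hs),
    exists_right_unit_of_mem_sgMul hT' hT' (fun m hm => (hsu' m hm).2) hs'⟩

end Graded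

theorem nearlyEpsilonStrongly_iff_symmetrically_and_sUnital_general
    {G : Type*} [Group G] {S : Type*} [NonUnitalRing S]
    (𝒜 : G → AddSubgroup S)
    (hmul : ∀ (g h : G), ∀ a ∈ 𝒜 g, ∀ b ∈ 𝒜 h, a * b ∈ 𝒜 (g * h)) :
    IsNearlyEpsilonStronglyGraded 𝒜 ↔
      IsSymmetricallyGraded 𝒜 ∧ ∀ g : G, IsSUnitalSubgroup (sgMul (𝒜 g) (𝒜 g⁻¹)) := by
  have hmul' : ∀ g h : G, sgMul (𝒜 g) (𝒜 h) ≤ 𝒜 (g * h) := fun g h => sgMul_le.2 (hmul g h)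
  exact ⟨fun hne => ⟨hne.isSymmetricallyGraded hmul', hne.isSUnitalSubgroup hmul'⟩,
    fun ⟨hsym, hsu⟩ => hsym.isNearlyEpsilonStronglyGraded hmul' hsu⟩

/-- A `G`-graded ring `S` is nearly epsilon-strongly `G`-graded if and
only if `S` is symmetrically `G`-graded and, for each `g ∈ G`, the ring `S_g S_{g⁻¹}`
is s-unital. -/
theorem nearlyEpsilonStrongly_iff_symmetrically_and_sUnital
    {G : Type*} [Group G] [DecidableEq G] {S : Type*} [NonUnitalRing S]
    (𝒜 : G → AddSubgroup S)
    (hmul : ∀ (g h : G), ∀ a ∈ 𝒜 g, ∀ b ∈ 𝒜 h, a * b ∈ 𝒜 (g * h))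
    (hdecomp : DirectSum.IsInternal 𝒜) :
    IsNearlyEpsilonStronglyGraded 𝒜 ↔
      IsSymmetricallyGraded 𝒜 ∧ ∀ g : G, IsSUnitalSubgroup (sgMul (𝒜 g) (𝒜 g⁻¹)) :=
  nearlyEpsilonStrongly_iff_symmetrically_and_sUnital_general 𝒜 hmul
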